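/- arXiv:1908.09422 — 3 statements merged into one kernel-verified Lean document; each statement's English description precedes it below -/
import Mathlib

section
/- With F(x) = T(x + Bᵀ f(A x)) as above and G(y) = T⁻¹ y + Bᵀ f(A T⁻¹ y), the composition G ∘ F is the identity on V^N, using only that A Bᵀ = 0 and that the underlying field has characteristic 2 (so any vector added to itself is zero). -/
open Matrix

/-- G ∘ F is the identity, using only A * Bᵀ = 0 and characteristic 2. -/
theorem squeeze_left_inverse (n N Ni No : ℕ)
    (f : (Fin (Ni * n) → ZMod 2) → (Fin (No * n) → ZMod 2))
    (T Tinv : Matrix (Fin (N * n)) (Fin (N * n)) (ZMod 2))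
    (hT : T * Tinv = 1) (hT' : Tinv * T = 1)
    (A : Matrix (Fin (Ni * n)) (Fin (N * n)) (ZMod 2))
    (B : Matrix (Fin (No * n)) (Fin (N * n)) (ZMod 2))
    (hperp : A * Bᵀ = 0) :
    (fun y : Fin (N * n) → ZMod 2 =>
        Tinv.mulVec y + Bᵀ.mulVec (f (A.mulVec (Tinv.mulVec y)))) ∘
      (fun x : Fin (N * n) → ZMod 2 => T.mulVec (x + Bᵀ.mulVec (f (A.mulVec x)))) =
    id := by
  funext x
  simp only [Function.comp_apply, id_eq]
  have hTi : ∀ v : Fin (N * n) → ZMod 2, Tinv.mulVec (T.mulVec v) = v := by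
    intro v
    rw [mulVec_mulVec, hT', one_mulVec]
  rw [hTi]
  have hA : A.mulVec (x + Bᵀ.mulVec (f (A.mulVec x))) = A.mulVec x := by
    rw [mulVec_add, mulVec_mulVec, hperp, zero_mulVec, add_zero]
  rw [hA, add_assoc]
  have : Bᵀ.mulVec (f (A.mulVec x)) + Bᵀ.mulVec (f (A.mulVec x)) = 0 := by
    funext i; simp [CharTwo.add_self_eq_zero]
  rw [this, add_zero]
end

section
/- For a function g : F_2^{d1} → F_2^{d2} and u ∈ F_2^{d1}, v ∈ F_2^{d2}, define the differential probability δ_g(u,v) = 2^{-d1} · |{x : g(x+u) + g(x) = v}|. Then for F(x) = T(x + Bᵀ f(Ax)) and any (α, β), if α + T⁻¹β does not lie in the row space of B (i.e., the image of Bᵀ), then δ_F(α, β) = 0. -/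
open Matrix

/-- Differential probability of a vectorial boolean function. -/
noncomputable def dp {d1 d2 : ℕ} (g : (Fin d1 → ZMod 2) → (Fin d2 → ZMod 2))
    (u : Fin d1 → ZMod 2) (v : Fin d2 → ZMod 2) : ℝ :=
  ((Finset.univ.filter fun x : Fin d1 → ZMod 2 => g (x + u) + g x = v).card : ℝ) / 2 ^ d1

/-- if α + T⁻¹β is not in the row space of B then δ_F(α,β) = 0. -/
theorem dp_eq_zero_of_not_mem_rowspace (n N Ni No : ℕ)
    (f : (Fin (Ni * n) → ZMod 2) → (Fin (No * n) → ZMod 2))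
    (T Tinv : Matrix (Fin (N * n)) (Fin (N * n)) (ZMod 2))
    (hT : T * Tinv = 1) (hT' : Tinv * T = 1)
    (A : Matrix (Fin (Ni * n)) (Fin (N * n)) (ZMod 2))
    (B : Matrix (Fin (No * n)) (Fin (N * n)) (ZMod 2))
    (hA : A.rank = Ni * n)
    (hperp : A * Bᵀ = 0)
    (α β : Fin (N * n) → ZMod 2)
    (hβ : α + Tinv.mulVec β ∉ Set.range Bᵀ.mulVec) :
    dp (fun x : Fin (N * n) → ZMod 2 => T.mulVec (x + Bᵀ.mulVec (f (A.mulVec x)))) α β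
      = 0 := by
  unfold dp
  rw [div_eq_zero_iff]
  left
  norm_cast
  rw [Finset.card_eq_zero, Finset.filter_eq_empty_iff]
  intro x _ hx
  simp only at hx
  apply hβ
  refine ⟨f (A.mulVec (x + α)) + f (A.mulVec x), ?_⟩
  have heq : (x + α + Bᵀ.mulVec (f (A.mulVec (x + α))))
      + (x + Bᵀ.mulVec (f (A.mulVec x))) = Tinv.mulVec β := by
    have := congrArg Tinv.mulVec hx
    rwa [Matrix.mulVec_add, Matrix.mulVec_mulVec, Matrix.mulVec_mulVec, hT',
      Matrix.one_mulVec, Matrix.one_mulVec] at this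
  rw [Matrix.mulVec_add]
  funext i
  have h := congrFun heq i
  simp only [Pi.add_apply] at h ⊢
  have two : (2 : ZMod 2) = 0 := by decide
  linear_combination h - (α i + x i) * two
end

section
/- Let R_B be a right inverse of B (so B R_B = I of size nN_o). If α + T⁻¹β ∈ rowspace(B), then δ_F(α, β) = δ_f(Aα, R_Bᵀ(α + T⁻¹β)), where F(x) = T(x + Bᵀ f(Ax)), A is full rank with A Bᵀ = 0, and T is invertible. In particular, knowledge of all differentials of f determines all differentials of F. -/
open Matrix

lemma vec_add_self {d : ℕ} (v : Fin d → ZMod 2) : v + v = 0 := by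
  ext i
  exact CharTwo.add_self_eq_zero _

lemma vec_add_cancel {d : ℕ} (a b : Fin d → ZMod 2) : a + (a + b) = b := by
  rw [← add_assoc, vec_add_self, zero_add]

lemma fiber_card {m k : ℕ} (L : (Fin m → ZMod 2) →ₗ[ZMod 2] (Fin k → ZMod 2))
    (hL : Function.Surjective L) (y : Fin k → ZMod 2) :
    (Finset.univ.filter fun x => L x = y).card = Nat.card (LinearMap.ker L) := by
  classical
  obtain ⟨x0, hx0⟩ := hL y
  rw [← Fintype.card_subtype, ← Nat.card_eq_fintype_card]
  refine Nat.card_congr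
    (⟨fun x => ⟨x.1 + x0, ?_⟩, fun z => ⟨z.1 + x0, ?_⟩, ?_, ?_⟩ :
      {x // L x = y} ≃ LinearMap.ker L)
  · have : L (x.1 + x0) = 0 := by
      rw [map_add, x.2, hx0, vec_add_self]
    exact LinearMap.mem_ker.mpr this
  · have hz : L z.1 = 0 := LinearMap.mem_ker.mp z.2
    show L (z.1 + x0) = y
    rw [map_add, hz, hx0, zero_add]
  · intro x
    apply Subtype.ext
    show x.1 + x0 + x0 = x.1
    rw [add_assoc, vec_add_self, add_zero]
  · intro z
    apply Subtype.ext
    show z.1 + x0 + x0 = z.1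
    rw [add_assoc, vec_add_self, add_zero]

lemma count_comp {m k : ℕ} (L : (Fin m → ZMod 2) →ₗ[ZMod 2] (Fin k → ZMod 2))
    (hL : Function.Surjective L) (P : (Fin k → ZMod 2) → Prop) [DecidablePred P] :
    (Finset.univ.filter fun x => P (L x)).card * 2 ^ k
      = (Finset.univ.filter P).card * 2 ^ m := by
  classical
  have h1 : (Finset.univ.filter fun x => P (L x)).card
      = (Finset.univ.filter P).card * Nat.card (LinearMap.ker L) := by
    rw [Finset.card_eq_sum_card_fiberwise
      (f := fun x => L x) (t := Finset.univ.filter P)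
      (fun x hx => by simpa using (Finset.mem_filter.mp hx).2)]
    rw [Finset.sum_congr rfl (fun y hy => ?_), Finset.sum_const, smul_eq_mul]
    have hy' := (Finset.mem_filter.mp hy).2
    have : (Finset.univ.filter fun x => P (L x)).filter (fun a => L a = y)
        = Finset.univ.filter fun a => L a = y := by
      ext a
      simp only [Finset.mem_filter, Finset.mem_univ, true_and]
      constructor
      · exact fun h => h.2
      · exact fun h => ⟨h ▸ hy', h⟩
    rw [this, fiber_card L hL]
  have h2 : 2 ^ m = 2 ^ k * Nat.card (LinearMap.ker L) := by
    have h := Finset.card_eq_sum_card_fiberwise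
      (f := fun x : Fin m → ZMod 2 => L x) (s := Finset.univ) (t := Finset.univ)
      (fun x _ => Finset.mem_univ _)
    rw [Finset.sum_congr rfl (fun y _ => fiber_card L hL y), Finset.sum_const,
      smul_eq_mul, Finset.card_univ, Finset.card_univ] at h
    simpa [Fintype.card_fun] using h
  rw [h1, mul_assoc, mul_comm (Nat.card (LinearMap.ker L)), ← h2]

/-- if α + T⁻¹β lies in the row space of B, then
δ_F(α,β) = δ_f(Aα, R_Bᵀ(α + T⁻¹β)). -/
theorem dp_reduction (n N Ni No : ℕ)
    (f : (Fin (Ni * n) → ZMod 2) → (Fin (No * n) → ZMod 2))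
    (T Tinv : Matrix (Fin (N * n)) (Fin (N * n)) (ZMod 2))
    (hT : T * Tinv = 1) (hT' : Tinv * T = 1)
    (A : Matrix (Fin (Ni * n)) (Fin (N * n)) (ZMod 2))
    (B : Matrix (Fin (No * n)) (Fin (N * n)) (ZMod 2))
    (hA : A.rank = Ni * n) (hB : B.rank = No * n)
    (hperp : A * Bᵀ = 0)
    (RB : Matrix (Fin (N * n)) (Fin (No * n)) (ZMod 2))
    (hRB : B * RB = 1)
    (α β : Fin (N * n) → ZMod 2)
    (hβ : α + Tinv.mulVec β ∈ Set.range Bᵀ.mulVec) :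
    dp (fun x : Fin (N * n) → ZMod 2 => T.mulVec (x + Bᵀ.mulVec (f (A.mulVec x)))) α β
      = dp f (A.mulVec α) (RBᵀ.mulVec (α + Tinv.mulVec β)) := by
  classical
  obtain ⟨c, hc⟩ := hβ
  set γ : Fin (N * n) → ZMod 2 := α + Tinv.mulVec β with hγ
  set v : Fin (No * n) → ZMod 2 := RBᵀ.mulVec γ with hv
  have hRB' : RBᵀ * Bᵀ = 1 := by
    rw [← Matrix.transpose_mul, hRB, Matrix.transpose_one]
  have hRBB : ∀ w : Fin (No * n) → ZMod 2, RBᵀ.mulVec (Bᵀ.mulVec w) = w := by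
    intro w
    rw [Matrix.mulVec_mulVec, hRB', Matrix.one_mulVec]
  have hBv : Bᵀ.mulVec v = γ := by
    rw [hv, ← hc, hRBB, hc]
  -- the predicate equivalence
  have key : ∀ x : Fin (N * n) → ZMod 2,
      (T.mulVec ((x + α) + Bᵀ.mulVec (f (A.mulVec (x + α))))
          + T.mulVec (x + Bᵀ.mulVec (f (A.mulVec x))) = β)
        ↔ (f (A.mulVec x + A.mulVec α) + f (A.mulVec x) = v) := by
    intro x
    have hAx : A.mulVec (x + α) = A.mulVec x + A.mulVec α := Matrix.mulVec_add _ _ _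
    set d1 : Fin (No * n) → ZMod 2 := f (A.mulVec x + A.mulVec α) with hd1
    set d0 : Fin (No * n) → ZMod 2 := f (A.mulVec x) with hd0
    rw [hAx]
    have hsum : ((x + α) + Bᵀ.mulVec d1) + (x + Bᵀ.mulVec d0)
        = α + Bᵀ.mulVec (d1 + d0) := by
      rw [Matrix.mulVec_add]
      rw [add_assoc x α, add_add_add_comm, vec_add_self, zero_add, add_assoc]
    rw [← Matrix.mulVec_add, hsum]
    constructor
    · intro h
      have h2 : α + Bᵀ.mulVec (d1 + d0) = Tinv.mulVec β := by
        rw [← h, Matrix.mulVec_mulVec, hT', Matrix.one_mulVec]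
      have h3 : Bᵀ.mulVec (d1 + d0) = γ := by
        rw [hγ, ← h2, vec_add_cancel]
      have := congrArg RBᵀ.mulVec h3
      rwa [hRBB] at this
    · intro h
      rw [h, hBv, hγ, vec_add_cancel, Matrix.mulVec_mulVec, hT, Matrix.one_mulVec]
  -- surjectivity of A.mulVecLin
  have hsurj : Function.Surjective A.mulVecLin := by
    rw [← LinearMap.range_eq_top]
    apply Submodule.eq_top_of_finrank_eq
    rw [Module.finrank_fintype_fun_eq_card, Fintype.card_fin]
    exact hA
  -- counting
  have hcount := count_comp A.mulVecLin hsurj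
    (fun y => f (y + A.mulVec α) + f y = v)
  have hset : (Finset.univ.filter fun x : Fin (N * n) → ZMod 2 =>
      T.mulVec ((x + α) + Bᵀ.mulVec (f (A.mulVec (x + α))))
        + T.mulVec (x + Bᵀ.mulVec (f (A.mulVec x))) = β)
      = Finset.univ.filter fun x =>
        f (A.mulVecLin x + A.mulVec α) + f (A.mulVecLin x) = v := by
    apply Finset.filter_congr
    intro x _
    simpa [Matrix.mulVecLin_apply] using key x
  unfold dp
  rw [div_eq_div_iff (by positivity) (by positivity)]
  have := hcount
  rw [hset]
  exact_mod_cast hcount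
end
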